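/- Let 𝓑 be a set of n pairwise disjoint balls in ℝ^d with center set C, q ∈ ℝ^d, k ≤ n. If the i-th nearest center distance x_i = d_i(C,q) satisfies d_k(𝓑,q) ≤ x_{k-c_d}, then x_{k-c_d} ≤ 2·d_k(𝓑,q); that is, x_{k-c_d} is a 2-approximation to d_k(𝓑,q) from above in the sense d_k(𝓑,q) ≤ x_{k-c_d} ≤ 2 d_k(𝓑,q). -/

import Mathlib

/-! Write `D = d_k(𝓑, q)` and fix `ρ > 0` with `D ≤ ρ`. At least `k` balls lie within `D`
of `q`. Those of radius at least `ρ` are disjoint and meet `B(q, ρ)`, so by packing there are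
at most `c_d` of them; every other one has radius `< ρ`, hence its center lies within `D + ρ`
of `q`. So `x_{k - c_d} ≤ D + ρ`, and letting `ρ ↓ D` gives `x_{k - c_d} ≤ 2D`. The limit
(rather than `ρ = D`) is needed because `D` may be `0`. -/

/-- Distance from a point `q` to the ball `B(c, r)`. -/
noncomputable def ballDist {d : ℕ} (q c : EuclideanSpace ℝ (Fin d)) (r : ℝ) : ℝ :=
  max (‖q - c‖ - r) 0

/-- The `k`-th smallest distance from `q` to the balls `B (c i) (r i)`.
Taking all radii `0` gives the `k`-th nearest center distance. -/
noncomputable def kthDist {d n : ℕ} (c : Fin n → EuclideanSpace ℝ (Fin d))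
    (r : Fin n → ℝ) (k : ℕ) (q : EuclideanSpace ℝ (Fin d)) : ℝ :=
  sInf {x : ℝ | 0 ≤ x ∧ k ≤ {i : Fin n | ballDist q (c i) (r i) ≤ x}.ncard}

theorem isClosed_setOf_le_ncard_setOf_le {ι : Type*} [Finite ι] (f : ι → ℝ) (k : ℕ) :
    IsClosed {x : ℝ | k ≤ {i | f i ≤ x}.ncard} := by
  have hunion : {x : ℝ | k ≤ {i | f i ≤ x}.ncard} =
      ⋃ s : {s : Set ι // k ≤ s.ncard}, ⋂ i ∈ s.1, Set.Ici (f i) := by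
    ext x
    simp only [Set.mem_ofPred_eq, Set.mem_iUnion, Set.mem_iInter, Set.mem_Ici, Subtype.exists,
      exists_prop]
    exact ⟨fun h => ⟨_, h, fun _ hi => hi⟩,
      fun ⟨s, hs, hsx⟩ => hs.trans (Set.ncard_le_ncard hsx)⟩
  rw [hunion]
  exact isClosed_iUnion_of_finite fun s => isClosed_biInter fun i _ => isClosed_Ici

theorem sInf_mem_setOf_le_ncard_setOf_le {ι : Type*} [Finite ι] (f : ι → ℝ) {k : ℕ}
    (hk : k ≤ Nat.card ι) :
    sInf {x : ℝ | 0 ≤ x ∧ k ≤ {i | f i ≤ x}.ncard} ∈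
      {x : ℝ | 0 ≤ x ∧ k ≤ {i | f i ≤ x}.ncard} := by
  obtain ⟨M, hM⟩ := Finite.exists_le f
  have hne : {x : ℝ | 0 ≤ x ∧ k ≤ {i | f i ≤ x}.ncard}.Nonempty := by
    refine ⟨max M 0, le_max_right _ _, ?_⟩
    have hall : {i | f i ≤ max M 0} = Set.univ :=
      Set.eq_univ_of_forall fun i => (hM i).trans (le_max_left M 0)
    rwa [hall, Set.ncard_univ]
  exact (isClosed_Ici.inter (isClosed_setOf_le_ncard_setOf_le f k)).csInf_mem hne
    ⟨0, fun _ hx => hx.1⟩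

theorem ballDist_le_iff {d : ℕ} {q c : EuclideanSpace ℝ (Fin d)} {r x : ℝ} (hx : 0 ≤ x) :
    ballDist q c r ≤ x ↔ ‖q - c‖ ≤ x + r := by
  rw [ballDist, max_le_iff, sub_le_iff_le_add]
  exact and_iff_left hx

section kthDist

variable {d n : ℕ} (c : Fin n → EuclideanSpace ℝ (Fin d)) (r : Fin n → ℝ)
  (q : EuclideanSpace ℝ (Fin d))

theorem kthDist_nonneg_and_le_ncard {k : ℕ} (hkn : k ≤ n) :
    0 ≤ kthDist c r k q ∧
      k ≤ {i | ballDist q (c i) (r i) ≤ kthDist c r k q}.ncard :=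
  sInf_mem_setOf_le_ncard_setOf_le _ (by simpa using hkn)

theorem kthDist_le {k : ℕ} {x : ℝ} (hx : 0 ≤ x)
    (hk : k ≤ {i | ballDist q (c i) (r i) ≤ x}.ncard) : kthDist c r k q ≤ x :=
  csInf_le ⟨0, fun _ hy => hy.1⟩ ⟨hx, hk⟩

end kthDist

def IsPackingBound (d cd : ℕ) : Prop :=
  ∀ (p : EuclideanSpace ℝ (Fin d)) (ρ : ℝ), 0 < ρ → ∀ (m : ℕ)
    (w : Fin m → EuclideanSpace ℝ (Fin d)) (s : Fin m → ℝ),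
    (∀ i, ρ ≤ s i) →
    (∀ i j, i ≠ j →
      Disjoint (Metric.closedBall (w i) (s i)) (Metric.closedBall (w j) (s j))) →
    (∀ i, (Metric.closedBall (w i) (s i) ∩ Metric.closedBall p ρ).Nonempty) →
    m ≤ cd

theorem IsPackingBound.ncard_le {d cd : ℕ} (hcd : IsPackingBound d cd) {ι : Type*} [Finite ι]
    (w : ι → EuclideanSpace ℝ (Fin d)) (s : ι → ℝ)
    (hdisj : ∀ i j, i ≠ j →
      Disjoint (Metric.closedBall (w i) (s i)) (Metric.closedBall (w j) (s j)))
    (p : EuclideanSpace ℝ (Fin d)) {ρ : ℝ} (hρ : 0 < ρ) :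
    {i | ρ ≤ s i ∧ (Metric.closedBall (w i) (s i) ∩ Metric.closedBall p ρ).Nonempty}.ncard
      ≤ cd := by
  set S := {i | ρ ≤ s i ∧ (Metric.closedBall (w i) (s i) ∩ Metric.closedBall p ρ).Nonempty}
  let e := (Finite.equivFin S).symm
  refine hcd p ρ hρ (Nat.card S) (fun j => w (e j)) (fun j => s (e j))
    (fun j => (e j).2.1) (fun i j hij => hdisj _ _ fun h => hij ?_) (fun j => (e j).2.2)
  exact e.injective (Subtype.ext h)

theorem closedBall_inter_closedBall_nonempty_of_ballDist_le {d : ℕ}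
    {q c : EuclideanSpace ℝ (Fin d)} {r ρ : ℝ} (hr : 0 ≤ r) (hρ : 0 ≤ ρ)
    (h : ballDist q c r ≤ ρ) :
    (Metric.closedBall c r ∩ Metric.closedBall q ρ).Nonempty := by
  rw [ballDist, max_le_iff, sub_le_iff_le_add, ← dist_eq_norm] at h
  obtain ⟨y, hcy, hyq⟩ := exists_dist_le_le hr hρ (dist_comm q c ▸ h.1)
  exact ⟨y, by rwa [Metric.mem_closedBall, dist_comm], hyq⟩

theorem kthDist_centers_sub_le_kthDist_add {d n : ℕ} (c : Fin n → EuclideanSpace ℝ (Fin d))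
    (r : Fin n → ℝ)
    (hdisj : ∀ i j, i ≠ j →
      Disjoint (Metric.closedBall (c i) (r i)) (Metric.closedBall (c j) (r j)))
    {k cd : ℕ} (hkn : k ≤ n) (hcd : IsPackingBound d cd) (q : EuclideanSpace ℝ (Fin d))
    {ρ : ℝ} (hρ : 0 < ρ) (hDρ : kthDist c r k q ≤ ρ) :
    kthDist c (fun _ => 0) (k - cd) q ≤ kthDist c r k q + ρ := by
  obtain ⟨hD, hk⟩ := kthDist_nonneg_and_le_ncard c r q hkn
  set D := kthDist c r k q
  have hcover : {i | ballDist q (c i) (r i) ≤ D} ⊆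
      {i | ρ ≤ r i ∧ (Metric.closedBall (c i) (r i) ∩ Metric.closedBall q ρ).Nonempty} ∪
        {i | ballDist q (c i) 0 ≤ D + ρ} := by
    intro i hi
    by_cases hri : ρ ≤ r i
    · exact Or.inl ⟨hri, closedBall_inter_closedBall_nonempty_of_ballDist_le
        (hρ.le.trans hri) hρ.le (le_trans hi hDρ)⟩
    · right
      rw [Set.mem_ofPred_eq, ballDist_le_iff (by positivity), add_zero]
      rw [Set.mem_ofPred_eq, ballDist_le_iff hD] at hi
      linarith
  have hcount := (Set.ncard_le_ncard hcover).trans (Set.ncard_union_le _ _)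
  have hlarge := hcd.ncard_le c r hdisj q hρ
  exact kthDist_le c (fun _ => 0) q (by positivity) (by omega)

theorem stmt_17_general (d n : ℕ) (c : Fin n → EuclideanSpace ℝ (Fin d)) (r : Fin n → ℝ)
    (hdisj : ∀ i j, i ≠ j →
      Disjoint (Metric.closedBall (c i) (r i)) (Metric.closedBall (c j) (r j)))
    (k : ℕ) (hkn : k ≤ n) (cd : ℕ)
    (hcd : ∀ (p : EuclideanSpace ℝ (Fin d)) (ρ : ℝ), 0 < ρ → ∀ (m : ℕ)
        (w : Fin m → EuclideanSpace ℝ (Fin d)) (s : Fin m → ℝ),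
      (∀ i, ρ ≤ s i) →
      (∀ i j, i ≠ j →
        Disjoint (Metric.closedBall (w i) (s i)) (Metric.closedBall (w j) (s j))) →
      (∀ i, (Metric.closedBall (w i) (s i) ∩ Metric.closedBall p ρ).Nonempty) →
      m ≤ cd)
    (q : EuclideanSpace ℝ (Fin d)) :
    kthDist c (fun _ => (0 : ℝ)) (k - cd) q ≤ 2 * kthDist c r k q := by
  have hD := (kthDist_nonneg_and_le_ncard c r q hkn).1
  refine le_of_forall_pos_le_add fun ε hε => ?_
  have hle := kthDist_centers_sub_le_kthDist_add c r hdisj hkn hcd q (ρ := kthDist c r k q + ε)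
    (by positivity) (by linarith)
  linarith

/-- If `d_k(𝓑, q) ≤ x_{k - c_d}` (the `(k - c_d)`-th nearest center distance),
then `x_{k - c_d} ≤ 2 d_k(𝓑, q)`, i.e. `x_{k - c_d}` is a 2-approximation of
`d_k(𝓑, q)` from above. Here `cd` is the packing constant and `k > cd`. -/
theorem stmt_17 (d n : ℕ) (c : Fin n → EuclideanSpace ℝ (Fin d)) (r : Fin n → ℝ)
    (hr : ∀ i, 0 ≤ r i)
    (hdisj : ∀ i j, i ≠ j →
      Disjoint (Metric.closedBall (c i) (r i)) (Metric.closedBall (c j) (r j)))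
    (k : ℕ) (hkn : k ≤ n) (cd : ℕ) (hkcd : cd < k)
    (hcd : ∀ (p : EuclideanSpace ℝ (Fin d)) (ρ : ℝ), 0 < ρ → ∀ (m : ℕ)
        (w : Fin m → EuclideanSpace ℝ (Fin d)) (s : Fin m → ℝ),
      (∀ i, ρ ≤ s i) →
      (∀ i j, i ≠ j →
        Disjoint (Metric.closedBall (w i) (s i)) (Metric.closedBall (w j) (s j))) →
      (∀ i, (Metric.closedBall (w i) (s i) ∩ Metric.closedBall p ρ).Nonempty) →
      m ≤ cd)
    (q : EuclideanSpace ℝ (Fin d))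
    (hyp : kthDist c r k q ≤ kthDist c (fun _ => (0 : ℝ)) (k - cd) q) :
    kthDist c (fun _ => (0 : ℝ)) (k - cd) q ≤ 2 * kthDist c r k q :=
  stmt_17_general d n c r hdisj k hkn cd hcd q
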